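/- arXiv:1505.03425 — 7 statements merged into one kernel-verified Lean document; each statement's English description precedes it below -/
import Mathlib

section
/- Let R be a tournament on ℕ, let X ⊆ ℕ be infinite, and let E ⊆ X be finite. Then there exist a partition E = E₀ ∪ E₁ into disjoint sets and an infinite set Y ⊆ X∖E such that E₀ →_R Y and Y →_R E₁, i.e., R(y,x) holds for every y ∈ E₀ and x ∈ Y, and R(x,y) holds for every x ∈ Y and y ∈ E₁. -/
/-- `R` is a tournament on `ℕ`. -/
def Tournament (R : ℕ → ℕ → Prop) : Prop :=
  (∀ x, ¬ R x x) ∧ ∀ x y, x ≠ y → (R x y ↔ ¬ R y x)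

/-!
Classify each `x ∈ X ∖ E` by the set `{e ∈ E | R e x}` of its in-neighbours in `E`. There are
only finitely many classes, so by the pigeonhole principle one class `E₀` is infinite; take `Y`
to be that class and `E₁ = E ∖ E₀`. Every `x ∈ Y` lies outside `E`, so for `e ∈ E₁` the failure
of `R e x` forces `R x e`.
-/

theorem Set.Infinite.exists_infinite_fiber_of_mapsTo {α β : Type*} {s : Set α} {t : Set β}
    {f : α → β} (hs : s.Infinite) (hf : Set.MapsTo f s t) (ht : t.Finite) :
    ∃ b ∈ t, {a ∈ s | f a = b}.Infinite := by
  by_contra! h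
  exact hs <| (ht.biUnion h).subset fun a ha => Set.mem_biUnion (hf ha) ⟨ha, rfl⟩

theorem tournament_partition_reservoir_general (R : ℕ → ℕ → Prop) (hR : Tournament R)
    (X : Set ℕ) (hX : X.Infinite) (E : Set ℕ) (hE : E.Finite) :
    ∃ (E₀ E₁ Y : Set ℕ), E₀ ∪ E₁ = E ∧ Disjoint E₀ E₁ ∧
      Y ⊆ X \ E ∧ Y.Infinite ∧
      (∀ y ∈ E₀, ∀ x ∈ Y, R y x) ∧ (∀ x ∈ Y, ∀ y ∈ E₁, R x y) := by
  let inNbhd : ℕ → Set ℕ := fun x => {e ∈ E | R e x}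
  have hmaps : Set.MapsTo inNbhd (X \ E) E.powerset := fun x _ => Set.sep_subset E _
  obtain ⟨E₀, hE₀, hY⟩ :=
    (hX.sdiff hE).exists_infinite_fiber_of_mapsTo hmaps hE.powerset
  refine ⟨E₀, E \ E₀, {x ∈ X \ E | inNbhd x = E₀}, Set.union_sdiff_cancel hE₀,
    disjoint_sdiff_self_right, Set.sep_subset _ _, hY, ?_, ?_⟩
  · rintro y hy x ⟨-, rfl⟩
    exact hy.2
  · rintro x ⟨⟨-, hxE⟩, rfl⟩ y ⟨hyE, hyx⟩
    have hxy : x ≠ y := fun h => hxE (h ▸ hyE)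
    exact (hR.2 x y hxy).mpr fun h => hyx ⟨hyE, h⟩

/-- Given a tournament `R` on `ℕ`, an infinite set `X` and a finite `E ⊆ X`,
there are a partition `E = E₀ ∪ E₁` and an infinite `Y ⊆ X ∖ E` with
`E₀ →_R Y` and `Y →_R E₁`. -/
theorem tournament_partition_reservoir (R : ℕ → ℕ → Prop) (hR : Tournament R)
    (X : Set ℕ) (hX : X.Infinite) (E : Set ℕ) (hEX : E ⊆ X) (hE : E.Finite) :
    ∃ (E₀ E₁ Y : Set ℕ), E₀ ∪ E₁ = E ∧ Disjoint E₀ E₁ ∧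
      Y ⊆ X \ E ∧ Y.Infinite ∧
      (∀ y ∈ E₀, ∀ x ∈ Y, R y x) ∧ (∀ x ∈ Y, ∀ y ∈ E₁, R x y) :=
  tournament_partition_reservoir_general R hR X hX E hE
end

section
/- Let R be a tournament on ℕ, let F be a finite R-transitive set, and let Z ⊆ ℕ be a set disjoint from F such that F ∪ {x} is R-transitive for every x ∈ Z and Z is included in a minimal R-interval of F. Let E ⊆ Z be a finite R-transitive set and V ⊆ Z a set such that every element of F is less than every element of E, every element of E is less than every element of V (in the natural order of ℕ), and either E →_R V or V →_R E. Then F ∪ E ∪ {x} is R-transitive for every x ∈ V. -/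
/-- `F` is `R`-transitive. -/
def RTransitive (R : ℕ → ℕ → Prop) (F : Set ℕ) : Prop :=
  ∀ x ∈ F, ∀ y ∈ F, ∀ z ∈ F, R x y → R y z → R x z

/-- `I` is an `R`-interval of the finite `R`-transitive set `F`. -/
def IsInterval (R : ℕ → ℕ → Prop) (F I : Set ℕ) : Prop :=
  (∃ a ∈ F, ∃ b ∈ F, R a b ∧ I = {x | R a x ∧ R x b}) ∨
  (∃ a ∈ F, I = {x | R a x}) ∨
  (∃ b ∈ F, I = {x | R x b}) ∨
  I = Set.univ

/-- `I` is a minimal `R`-interval of `F`: an interval containing no element of `F`. -/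
def IsMinimalInterval (R : ℕ → ℕ → Prop) (F I : Set ℕ) : Prop :=
  IsInterval R F I ∧ ∀ c ∈ F, c ∉ I

/-- Transitivity part of the sufficient extension conditions for
Erdős–Moser conditions. -/
theorem em_condition_block_extension_transitive (R : ℕ → ℕ → Prop) (hR : Tournament R)
    (F : Set ℕ) (hFfin : F.Finite) (hFtrans : RTransitive R F)
    (Z : Set ℕ) (hdisj : Disjoint F Z)
    (hone : ∀ x ∈ Z, RTransitive R (F ∪ {x}))
    (hmin : ∃ I : Set ℕ, IsMinimalInterval R F I ∧ Z ⊆ I)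
    (E : Set ℕ) (hEZ : E ⊆ Z) (hEfin : E.Finite) (hEtrans : RTransitive R E)
    (V : Set ℕ) (hVZ : V ⊆ Z)
    (hFE : ∀ a ∈ F, ∀ b ∈ E, a < b) (hEV : ∀ b ∈ E, ∀ v ∈ V, b < v)
    (harrow : (∀ a ∈ E, ∀ v ∈ V, R a v) ∨ (∀ v ∈ V, ∀ a ∈ E, R v a)) :
    ∀ x ∈ V, RTransitive R (F ∪ E ∪ {x}) := by

  obtain ⟨hirr, hiff⟩ := hR
  have asym : ∀ a b, R a b → ¬ R b a := by
    intro a b hab hba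
    by_cases h : a = b
    · exact hirr a (h ▸ hab)
    · exact ((hiff a b h).mp hab) hba
  have tricho : ∀ a b, a ≠ b → R a b ∨ R b a := by
    intro a b h
    by_cases hba : R b a
    · exact Or.inr hba
    · exact Or.inl ((hiff a b h).mpr hba)
  have neFZ : ∀ c ∈ F, ∀ z ∈ Z, c ≠ z := by
    intro c hc z hz h
    exact Set.disjoint_left.mp hdisj hc (h ▸ hz)
  obtain ⟨I, ⟨hI, hInoF⟩, hZI⟩ := hmin
  have key : ∀ c ∈ F, ∀ z ∈ Z, ∀ z' ∈ Z, R c z → R c z' := by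
    intro c hc z hz z' hz' hcz
    have hzI := hZI hz
    have hz'I := hZI hz'
    rcases hI with ⟨a, ha, b, hb, hab, hIeq⟩ | ⟨a, ha, hIeq⟩ | ⟨b, hb, hIeq⟩ | hIeq
    · subst hIeq
      obtain ⟨haz, hzb⟩ := hzI
      obtain ⟨haz', hz'b⟩ := hz'I
      by_cases hca : c = a
      · exact hca ▸ haz'
      rcases tricho c a hca with h1 | h1
      · exact hone z' hz' c (Or.inl hc) a (Or.inl ha) z' (Or.inr rfl) h1 haz'
      · by_cases hcb : c = b
        · exact absurd hcz (asym _ _ (hcb ▸ hzb))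
        rcases tricho c b hcb with h2 | h2
        · exact absurd (⟨h1, h2⟩ : c ∈ {x | R a x ∧ R x b}) (hInoF c hc)
        · exact absurd hcz (asym _ _
            (hone z hz z (Or.inr rfl) b (Or.inl hb) c (Or.inl hc) hzb h2))
    · subst hIeq
      by_cases hca : c = a
      · exact hca ▸ hz'I
      rcases tricho c a hca with h1 | h1
      · exact hone z' hz' c (Or.inl hc) a (Or.inl ha) z' (Or.inr rfl) h1 hz'I
      · exact absurd h1 (hInoF c hc)
    · subst hIeq
      by_cases hcb : c = b
      · exact absurd hcz (asym _ _ (hcb ▸ hzI))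
      rcases tricho c b hcb with h2 | h2
      · exact absurd h2 (hInoF c hc)
      · exact absurd hcz (asym _ _
          (hone z hz z (Or.inr rfl) b (Or.inl hb) c (Or.inl hc) hzI h2))
    · exact absurd (by rw [hIeq]; trivial) (hInoF c hc)
  have key2 : ∀ c ∈ F, ∀ z ∈ Z, ∀ z' ∈ Z, R z c → R z' c := by
    intro c hc z hz z' hz' hzc
    rcases tricho z' c (fun h => (neFZ c hc z' hz') h.symm) with h | h
    · exact h
    · exact absurd hzc (asym _ _ (key c hc z' hz' z hz h))
  have gen : ∀ G : Set ℕ, G ⊆ Z → RTransitive R G → RTransitive R (F ∪ G) := by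
    intro G hGZ hGtr u hu v hv w hw huv hvw
    rcases hu with hu | hu <;> rcases hv with hv | hv <;> rcases hw with hw | hw
    · exact hFtrans u hu v hv w hw huv hvw
    · exact hone w (hGZ hw) u (Or.inl hu) v (Or.inl hv) w (Or.inr rfl) huv hvw
    · exact hone v (hGZ hv) u (Or.inl hu) v (Or.inr rfl) w (Or.inl hw) huv hvw
    · exact key u hu v (hGZ hv) w (hGZ hw) huv
    · exact hone u (hGZ hu) u (Or.inr rfl) v (Or.inl hv) w (Or.inl hw) huv hvw
    · exact absurd huv (asym _ _ (key v hv w (hGZ hw) u (hGZ hu) hvw))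
    · exact key2 w hw v (hGZ hv) u (hGZ hu) hvw
    · exact hGtr u hu v hv w hw huv hvw
  intro x hxV
  have hxZ := hVZ hxV
  have hGZ : E ∪ {x} ⊆ Z := Set.union_subset hEZ (Set.singleton_subset_iff.mpr hxZ)
  have hGtr : RTransitive R (E ∪ {x}) := by
    intro u hu v hv w hw huv hvw
    simp only [Set.mem_union, Set.mem_singleton_iff] at hu hv hw
    rcases harrow with hEx | hxE
    · rcases hu with hu | hu <;> rcases hv with hv | hv <;> rcases hw with hw | hw
      · exact hEtrans u hu v hv w hw huv hvw
      · exact hw ▸ hEx u hu x hxV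
      · rw [hv] at hvw; exact absurd hvw (asym _ _ (hEx w hw x hxV))
      · rw [hv, hw] at hvw; exact absurd hvw (hirr x)
      · rw [hu] at huv; exact absurd huv (asym _ _ (hEx v hv x hxV))
      · rw [hu] at huv; exact absurd huv (asym _ _ (hEx v hv x hxV))
      · rw [hu, hv] at huv; exact absurd huv (hirr x)
      · rw [hu, hv] at huv; exact absurd huv (hirr x)
    · rcases hu with hu | hu <;> rcases hv with hv | hv <;> rcases hw with hw | hw
      · exact hEtrans u hu v hv w hw huv hvw
      · rw [hw] at hvw; exact absurd hvw (asym _ _ (hxE x hxV v hv))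
      · rw [hv] at huv; exact absurd huv (asym _ _ (hxE x hxV u hu))
      · rw [hv, hw] at hvw; exact absurd hvw (hirr x)
      · rw [hu]; exact hxE x hxV w hw
      · rw [hw] at hvw; exact absurd hvw (asym _ _ (hxE x hxV v hv))
      · rw [hu, hv] at huv; exact absurd huv (hirr x)
      · rw [hu, hv] at huv; exact absurd huv (hirr x)
  rw [Set.union_assoc]
  exact gen (E ∪ {x}) hGZ hGtr
end

section
/- Let R be a tournament on ℕ, let F be a finite R-transitive set, and let Z ⊆ ℕ be a set disjoint from F such that F ∪ {x} is R-transitive for every x ∈ Z and Z is included in a minimal R-interval of F. Let E ⊆ Z be a finite R-transitive set and V ⊆ Z a set such that either E →_R V or V →_R E. Then V is included in a minimal R-interval of F ∪ E. -/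
lemma tour_total {R : ℕ → ℕ → Prop} (hR : Tournament R) {x y : ℕ} (h : x ≠ y) :
    R x y ∨ R y x := by
  by_cases hxy : R x y
  · exact Or.inl hxy
  · exact Or.inr (by_contra fun h' => hxy ((hR.2 x y h).mpr h'))

lemma exists_max_aux (R : ℕ → ℕ → Prop) (hR : Tournament R) :
    ∀ s : Finset ℕ, s.Nonempty →
    (∀ x ∈ s, ∀ y ∈ s, ∀ z ∈ s, R x y → R y z → R x z) →
    ∃ m ∈ s, ∀ e ∈ s, e ≠ m → R e m := by
  intro s
  induction s using Finset.induction_on with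
  | empty => simp
  | @insert a s ha ih =>
    intro _ htr
    rcases s.eq_empty_or_nonempty with rfl | hs
    · exact ⟨a, by simp, by simp⟩
    · obtain ⟨m, hm, hmax⟩ := ih hs
        (fun x hx y hy z hz => htr x (by simp [hx]) y (by simp [hy]) z (by simp [hz]))
      have ham : a ≠ m := fun h => ha (h ▸ hm)
      rcases tour_total hR ham with h1 | h1
      · refine ⟨m, by simp [hm], ?_⟩
        intro e he hne
        rcases Finset.mem_insert.mp he with rfl | he'
        · exact h1
        · exact hmax e he' hne
      · refine ⟨a, by simp, ?_⟩
        intro e he hne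
        rcases Finset.mem_insert.mp he with rfl | he'
        · exact absurd rfl hne
        · rcases eq_or_ne e m with rfl | hem
          · exact h1
          · exact htr e (by simp [he']) m (by simp [hm]) a (by simp)
              (hmax e he' hem) h1

/-- max of a finite nonempty transitive set -/
lemma exists_max {R : ℕ → ℕ → Prop} (hR : Tournament R) {E : Set ℕ}
    (hfin : E.Finite) (hne : E.Nonempty) (htr : RTransitive R E) :
    ∃ m ∈ E, ∀ e ∈ E, e ≠ m → R e m := by
  obtain ⟨m, hm, hmax⟩ := exists_max_aux R hR hfin.toFinset
    (by simpa using hne)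
    (fun x hx y hy z hz => htr x (by simpa using hx) y (by simpa using hy) z (by simpa using hz))
  exact ⟨m, by simpa using hm, fun e he => hmax e (by simpa using he)⟩

lemma exists_min {R : ℕ → ℕ → Prop} (hR : Tournament R) {E : Set ℕ}
    (hfin : E.Finite) (hne : E.Nonempty) (htr : RTransitive R E) :
    ∃ m ∈ E, ∀ e ∈ E, e ≠ m → R m e := by
  have hR' : Tournament (fun x y => R y x) :=
    ⟨hR.1, fun x y h => (hR.2 y x h.symm)⟩
  have htr' : RTransitive (fun x y => R y x) E :=
    fun x hx y hy z hz h1 h2 => htr z hz y hy x hx h2 h1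
  obtain ⟨m, hm, hmax⟩ := exists_max hR' hfin hne htr'
  exact ⟨m, hm, hmax⟩

/-- Minimal-interval part of the sufficient extension conditions for
Erdős–Moser conditions. -/
theorem em_condition_block_extension_interval (R : ℕ → ℕ → Prop) (hR : Tournament R)
    (F : Set ℕ) (hFfin : F.Finite) (hFtrans : RTransitive R F)
    (Z : Set ℕ) (hdisj : Disjoint F Z)
    (hone : ∀ x ∈ Z, RTransitive R (F ∪ {x}))
    (hmin : ∃ I : Set ℕ, IsMinimalInterval R F I ∧ Z ⊆ I)
    (E : Set ℕ) (hEZ : E ⊆ Z) (hEfin : E.Finite) (hEtrans : RTransitive R E)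
    (V : Set ℕ) (hVZ : V ⊆ Z)
    (harrow : (∀ a ∈ E, ∀ v ∈ V, R a v) ∨ (∀ v ∈ V, ∀ a ∈ E, R v a)) :
    ∃ I : Set ℕ, IsMinimalInterval R (F ∪ E) I ∧ V ⊆ I := by
  obtain ⟨I, ⟨hI, hImin⟩, hZI⟩ := hmin
  rcases E.eq_empty_or_nonempty with rfl | hEne
  · exact ⟨I, by simpa using ⟨hI, hImin⟩, fun v hv => hZI (hVZ hv)⟩
  rcases harrow with harrow | harrow
  · -- E → V : use the maximum m of E as left endpoint
    obtain ⟨m, hmE, hmax⟩ := exists_max hR hEfin hEne hEtrans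
    have hmZ : m ∈ Z := hEZ hmE
    have hFm : RTransitive R (F ∪ {m}) := hone m hmZ
    have hmI : m ∈ I := hZI hmZ
    have hmFE : m ∈ F ∪ E := Or.inr hmE
    have hEnot : ∀ c ∈ E, ¬ R m c := by
      intro c hc hmc
      rcases eq_or_ne c m with rfl | hcm
      · exact hR.1 c hmc
      · exact (hR.2 m c (Ne.symm hcm)).mp hmc (hmax c hc hcm)
    have hVm : ∀ v ∈ V, R m v := fun v hv => harrow m hmE v hv
    rcases hI with ⟨a0, ha0, b0, hb0, hab, rfl⟩ | ⟨a0, ha0, rfl⟩ | ⟨b0, hb0, rfl⟩ | rfl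
    · refine ⟨{x | R m x ∧ R x b0}, ⟨Or.inl ⟨m, hmFE, b0, Or.inl hb0, hmI.2, rfl⟩, ?_⟩,
        fun v hv => ⟨hVm v hv, (hZI (hVZ hv)).2⟩⟩
      rintro c (hc | hc) ⟨h1, h2⟩
      · exact hImin c hc ⟨hFm a0 (Or.inl ha0) m (Or.inr rfl) c (Or.inl hc) hmI.1 h1, h2⟩
      · exact hEnot c hc h1
    · refine ⟨{x | R m x}, ⟨Or.inr (Or.inl ⟨m, hmFE, rfl⟩), ?_⟩,
        fun v hv => hVm v hv⟩
      rintro c (hc | hc) h1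
      · exact hImin c hc (hFm a0 (Or.inl ha0) m (Or.inr rfl) c (Or.inl hc) hmI h1)
      · exact hEnot c hc h1
    · refine ⟨{x | R m x ∧ R x b0}, ⟨Or.inl ⟨m, hmFE, b0, Or.inl hb0, hmI, rfl⟩, ?_⟩,
        fun v hv => ⟨hVm v hv, hZI (hVZ hv)⟩⟩
      rintro c (hc | hc) ⟨h1, h2⟩
      · exact hImin c hc h2
      · exact hEnot c hc h1
    · refine ⟨{x | R m x}, ⟨Or.inr (Or.inl ⟨m, hmFE, rfl⟩), ?_⟩,
        fun v hv => hVm v hv⟩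
      rintro c (hc | hc) h1
      · exact hImin c hc (Set.mem_univ c)
      · exact hEnot c hc h1
  · -- V → E : use the minimum m of E as right endpoint
    obtain ⟨m, hmE, hmin'⟩ := exists_min hR hEfin hEne hEtrans
    have hmZ : m ∈ Z := hEZ hmE
    have hFm : RTransitive R (F ∪ {m}) := hone m hmZ
    have hmI : m ∈ I := hZI hmZ
    have hmFE : m ∈ F ∪ E := Or.inr hmE
    have hEnot : ∀ c ∈ E, ¬ R c m := by
      intro c hc hmc
      rcases eq_or_ne c m with rfl | hcm
      · exact hR.1 c hmc
      · exact (hR.2 c m hcm).mp hmc (hmin' c hc hcm)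
    have hVm : ∀ v ∈ V, R v m := fun v hv => harrow v hv m hmE
    rcases hI with ⟨a0, ha0, b0, hb0, hab, rfl⟩ | ⟨a0, ha0, rfl⟩ | ⟨b0, hb0, rfl⟩ | rfl
    · refine ⟨{x | R a0 x ∧ R x m}, ⟨Or.inl ⟨a0, Or.inl ha0, m, hmFE, hmI.1, rfl⟩, ?_⟩,
        fun v hv => ⟨(hZI (hVZ hv)).1, hVm v hv⟩⟩
      rintro c (hc | hc) ⟨h1, h2⟩
      · exact hImin c hc ⟨h1, hFm c (Or.inl hc) m (Or.inr rfl) b0 (Or.inl hb0) h2 hmI.2⟩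
      · exact hEnot c hc h2
    · refine ⟨{x | R a0 x ∧ R x m}, ⟨Or.inl ⟨a0, Or.inl ha0, m, hmFE, hmI, rfl⟩, ?_⟩,
        fun v hv => ⟨hZI (hVZ hv), hVm v hv⟩⟩
      rintro c (hc | hc) ⟨h1, h2⟩
      · exact hImin c hc h1
      · exact hEnot c hc h2
    · refine ⟨{x | R x m}, ⟨Or.inr (Or.inr (Or.inl ⟨m, hmFE, rfl⟩)), ?_⟩,
        fun v hv => hVm v hv⟩
      rintro c (hc | hc) h1
      · exact hImin c hc (hFm c (Or.inl hc) m (Or.inr rfl) b0 (Or.inl hb0) h1 hmI)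
      · exact hEnot c hc h1
    · refine ⟨{x | R x m}, ⟨Or.inr (Or.inr (Or.inl ⟨m, hmFE, rfl⟩)), ?_⟩,
        fun v hv => hVm v hv⟩
      rintro c (hc | hc) h1
      · exact hImin c hc (Set.mem_univ c)
      · exact hEnot c hc h1
end

section
/- Let R be a tournament on ℕ, let X = {x₀ < x₁ < ⋯} be an infinite subset of ℕ, and let Q be a predicate on finite subsets of ℕ. For n ∈ ℕ let H_n = {x₀, …, x_{n−1}} be the set of the first n elements of X. Suppose that for every n there is a partition H_n = E₀ ∪ E₁ into disjoint sets such that for every i < 2 and every R-transitive subset F₁ ⊆ E_i, Q(F₁) fails. Then there is a partition X = Z₀ ∪ Z₁ into disjoint sets such that for every i < 2 and every finite R-transitive subset F₁ ⊆ Z_i, Q(F₁) fails. -/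
/-- Compactness for avoiding partitions: if every finite initial segment of the
infinite set `X = {x₀ < x₁ < ⋯}` admits a 2-partition avoiding `Q` on
`R`-transitive subsets, then so does `X` itself. -/
theorem avoiding_partition_compactness (R : ℕ → ℕ → Prop) (hR : Tournament R)
    (x : ℕ → ℕ) (hx : StrictMono x) (Q : Finset ℕ → Prop)
    (havoid : ∀ n : ℕ, ∃ E₀ E₁ : Finset ℕ,
      E₀ ∪ E₁ = (Finset.range n).image x ∧ Disjoint E₀ E₁ ∧
      (∀ F₁ ⊆ E₀, RTransitive R ↑F₁ → ¬ Q F₁) ∧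
      (∀ F₁ ⊆ E₁, RTransitive R ↑F₁ → ¬ Q F₁)) :
    ∃ Z₀ Z₁ : Set ℕ, Z₀ ∪ Z₁ = Set.range x ∧ Disjoint Z₀ Z₁ ∧
      (∀ F₁ : Finset ℕ, ↑F₁ ⊆ Z₀ → RTransitive R ↑F₁ → ¬ Q F₁) ∧
      (∀ F₁ : Finset ℕ, ↑F₁ ⊆ Z₁ → RTransitive R ↑F₁ → ¬ Q F₁) := by
  choose E₀ E₁ hunion hdisj h0 h1 using havoid
  let U : Ultrafilter ℕ := Filter.hyperfilter ℕ
  set Z₀ : Set ℕ := {y | y ∈ Set.range x ∧ {n | y ∈ E₀ n} ∈ U} with hZ₀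
  set Z₁ : Set ℕ := {y | y ∈ Set.range x ∧ {n | y ∈ E₀ n} ∉ U} with hZ₁
  -- key: for y ∈ range x, the set of n with y ∈ E₁ n, when y ∉ E₀
  have hmem : ∀ y ∈ Set.range x, ∀ᶠ n in (U : Filter ℕ), y ∈ E₀ n ∨ y ∈ E₁ n := by
    rintro y ⟨k, rfl⟩
    have : {n | k < n} ∈ (U : Filter ℕ) := by
      refine Filter.hyperfilter_le_cofinite ?_
      have : {n | k < n}ᶜ = {n | n ≤ k} := by ext n; simp
      simp only [Filter.mem_cofinite, this]
      exact Set.finite_le_nat k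
    filter_upwards [this] with n hn
    have : x k ∈ E₀ n ∪ E₁ n := by
      rw [hunion n]
      exact Finset.mem_image.2 ⟨k, Finset.mem_range.2 hn, rfl⟩
    simpa using this
  refine ⟨Z₀, Z₁, ?_, ?_, ?_, ?_⟩
  · ext y
    simp only [hZ₀, hZ₁, Set.mem_union, Set.mem_setOf_eq]
    constructor
    · rintro (⟨h, _⟩ | ⟨h, _⟩) <;> exact h
    · intro h; by_cases hU : {n | y ∈ E₀ n} ∈ U
      · exact Or.inl ⟨h, hU⟩
      · exact Or.inr ⟨h, hU⟩
  · rw [Set.disjoint_left]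
    rintro y ⟨_, h⟩ ⟨_, h'⟩; exact h' h
  · intro F hF hFt hQ
    have key : {n | ∀ y ∈ F, y ∈ E₀ n} ∈ (U : Filter ℕ) := by
      show ∀ᶠ n in (U : Filter ℕ), ∀ y ∈ F, y ∈ E₀ n
      rw [Filter.eventually_all_finset]
      intro y hy
      exact (hF hy).2
    obtain ⟨n, hn⟩ := U.neBot.nonempty_of_mem key
    exact h0 n F (fun y hy => hn y hy) hFt hQ
  · intro F hF hFt hQ
    have key : {n | ∀ y ∈ F, y ∈ E₁ n} ∈ (U : Filter ℕ) := by
      show ∀ᶠ n in (U : Filter ℕ), ∀ y ∈ F, y ∈ E₁ n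
      rw [Filter.eventually_all_finset]
      intro y hy
      have h1 : {n | y ∈ E₀ n} ∉ U := (hF hy).2
      have h2 : {n | y ∈ E₀ n}ᶜ ∈ U := Ultrafilter.compl_mem_iff_notMem.2 h1
      filter_upwards [h2, hmem y (hF hy).1] with n hn hn'
      rcases hn' with h | h
      · exact absurd h hn
      · exact h
    obtain ⟨n, hn⟩ := U.neBot.nonempty_of_mem key
    exact h1 n F (fun y hy => hn y hy) hFt hQ
end

section
/- For stage trees of a common depth n, the relations ⊑ and ⊏ satisfy: (1) ⊑ is transitive; (2) ⊏ is transitive; (3) T₁ ⊏ T₀ implies T₁ ⊑ T₀; (4) if T₂ ⊑ T₁ and T₁ ⊏ T₀ then T₂ ⊏ T₀; and (5) if T₂ ⊏ T₁ and T₁ ⊑ T₀ then T₂ ⊏ T₀. -/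
/-- Abstract stage trees: a stage tree of depth 0 is a finite set of parts;
a stage tree of depth `n+1` is a finite set of parts together with a stage
tree of depth `n` below each part. -/
inductive StageTree : ℕ → Type where
  | leaf (P : Finset ℕ) : StageTree 0
  | node {n : ℕ} (P : Finset ℕ) (h : {ν // ν ∈ P} → StageTree n) : StageTree (n + 1)

/-- The pair of relations `(⊑, ⊏)` between stage trees of equal depth,
defined by mutual recursion on the depth. -/
def StageTree.sq : {n : ℕ} → StageTree n → StageTree n → Prop × Prop
  | 0, .leaf P₁, .leaf P₀ =>
    ⟨∃ f : {ν // ν ∈ P₁} → {ν // ν ∈ P₀}, Function.Injective f,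
     ∃ f : {ν // ν ∈ P₁} → {ν // ν ∈ P₀},
       Function.Injective f ∧ ¬ Function.Surjective f⟩
  | _ + 1, .node P₁ h₁, .node P₀ h₀ =>
    ⟨∃ f : {ν // ν ∈ P₁} → {ν // ν ∈ P₀},
       ∀ ν, ((∃ ν', ν' ≠ ν ∧ f ν' = f ν) → ((h₁ ν).sq (h₀ (f ν))).2) ∧
         (¬ (∃ ν', ν' ≠ ν ∧ f ν' = f ν) → ((h₁ ν).sq (h₀ (f ν))).1),
     ∃ f : {ν // ν ∈ P₁} → {ν // ν ∈ P₀},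
       (∀ ν, ((∃ ν', ν' ≠ ν ∧ f ν' = f ν) → ((h₁ ν).sq (h₀ (f ν))).2) ∧
         (¬ (∃ ν', ν' ≠ ν ∧ f ν' = f ν) → ((h₁ ν).sq (h₀ (f ν))).1)) ∧
       ∃ μ : {ν // ν ∈ P₀}, ∀ ν, f ν = μ → ((h₁ ν).sq (h₀ μ)).2⟩

/-- `T₁ ⊑ T₀`. -/
def StageTree.sqle {n : ℕ} (T₁ T₀ : StageTree n) : Prop := (T₁.sq T₀).1

/-- `T₁ ⊏ T₀`. -/
def StageTree.sqlt {n : ℕ} (T₁ T₀ : StageTree n) : Prop := (T₁.sq T₀).2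

/-- Basic properties of `⊑` and `⊏` on stage trees of a common depth:
both are transitive, `⊏` implies `⊑`, and `⊏` composes with `⊑` on either
side to give `⊏`. -/
theorem StageTree.sq_props (n : ℕ) :
    (∀ T₂ T₁ T₀ : StageTree n, T₂.sqle T₁ → T₁.sqle T₀ → T₂.sqle T₀) ∧
    (∀ T₂ T₁ T₀ : StageTree n, T₂.sqlt T₁ → T₁.sqlt T₀ → T₂.sqlt T₀) ∧
    (∀ T₁ T₀ : StageTree n, T₁.sqlt T₀ → T₁.sqle T₀) ∧
    (∀ T₂ T₁ T₀ : StageTree n, T₂.sqle T₁ → T₁.sqlt T₀ → T₂.sqlt T₀) ∧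
    (∀ T₂ T₁ T₀ : StageTree n, T₂.sqlt T₁ → T₁.sqle T₀ → T₂.sqlt T₀) := by
  induction n with
  | zero =>
    have p1 : ∀ T₂ T₁ T₀ : StageTree 0, T₂.sqle T₁ → T₁.sqle T₀ → T₂.sqle T₀ := by
      rintro ⟨P₂⟩ ⟨P₁⟩ ⟨P₀⟩ ⟨f, hf⟩ ⟨g, hg⟩
      exact ⟨g ∘ f, hg.comp hf⟩
    have p3 : ∀ T₁ T₀ : StageTree 0, T₁.sqlt T₀ → T₁.sqle T₀ := by
      rintro ⟨P₁⟩ ⟨P₀⟩ ⟨f, hf, -⟩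
      exact ⟨f, hf⟩
    have p4 : ∀ T₂ T₁ T₀ : StageTree 0, T₂.sqle T₁ → T₁.sqlt T₀ → T₂.sqlt T₀ := by
      rintro ⟨P₂⟩ ⟨P₁⟩ ⟨P₀⟩ ⟨f, hf⟩ ⟨g, hg, hgs⟩
      exact ⟨g ∘ f, hg.comp hf, fun hs => hgs hs.of_comp⟩
    have p5 : ∀ T₂ T₁ T₀ : StageTree 0, T₂.sqlt T₁ → T₁.sqle T₀ → T₂.sqlt T₀ := by
      rintro ⟨P₂⟩ ⟨P₁⟩ ⟨P₀⟩ ⟨f, hf, hfs⟩ ⟨g, hg⟩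
      refine ⟨g ∘ f, hg.comp hf, fun hs => hfs fun b => ?_⟩
      obtain ⟨a, ha⟩ := hs (g b)
      exact ⟨a, hg ha⟩
    exact ⟨p1, fun T₂ T₁ T₀ h2 h1 => p4 _ _ _ (p3 _ _ h2) h1, p3, p4, p5⟩
  | succ n ih =>
    obtain ⟨ile, -, iltle, ielt, ilte⟩ := ih
    have key : ∀ (P₂ P₁ P₀ : Finset ℕ)
        (h₂ : {ν // ν ∈ P₂} → StageTree n) (h₁ : {ν // ν ∈ P₁} → StageTree n)
        (h₀ : {ν // ν ∈ P₀} → StageTree n)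
        (f : {ν // ν ∈ P₂} → {ν // ν ∈ P₁}) (g : {ν // ν ∈ P₁} → {ν // ν ∈ P₀}),
        (∀ ν, ((∃ ν', ν' ≠ ν ∧ f ν' = f ν) → ((h₂ ν).sq (h₁ (f ν))).2) ∧
          (¬ (∃ ν', ν' ≠ ν ∧ f ν' = f ν) → ((h₂ ν).sq (h₁ (f ν))).1)) →
        (∀ μ, ((∃ μ', μ' ≠ μ ∧ g μ' = g μ) → ((h₁ μ).sq (h₀ (g μ))).2) ∧
          (¬ (∃ μ', μ' ≠ μ ∧ g μ' = g μ) → ((h₁ μ).sq (h₀ (g μ))).1)) →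
        ∀ ν, ((∃ ν', ν' ≠ ν ∧ (g ∘ f) ν' = (g ∘ f) ν) →
            ((h₂ ν).sq (h₀ ((g ∘ f) ν))).2) ∧
          (¬ (∃ ν', ν' ≠ ν ∧ (g ∘ f) ν' = (g ∘ f) ν) →
            ((h₂ ν).sq (h₀ ((g ∘ f) ν))).1) := by
      intro P₂ P₁ P₀ h₂ h₁ h₀ f g hf hg ν
      have hA : ((h₂ ν).sq (h₁ (f ν))).1 := by
        by_cases hc : ∃ ν', ν' ≠ ν ∧ f ν' = f ν
        · exact iltle _ _ ((hf ν).1 hc)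
        · exact (hf ν).2 hc
      have hB : ((h₁ (f ν)).sq (h₀ (g (f ν)))).1 := by
        by_cases hc : ∃ μ', μ' ≠ f ν ∧ g μ' = g (f ν)
        · exact iltle _ _ ((hg (f ν)).1 hc)
        · exact (hg (f ν)).2 hc
      constructor
      · rintro ⟨ν', hne, heq⟩
        by_cases hc : ∃ ν'', ν'' ≠ ν ∧ f ν'' = f ν
        · exact ilte _ _ _ ((hf ν).1 hc) hB
        · have hne' : f ν' ≠ f ν := fun h => hc ⟨ν', hne, h⟩
          exact ielt _ _ _ hA ((hg (f ν)).1 ⟨f ν', hne', heq⟩)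
      · intro _
        exact ile _ _ _ hA hB
    have p1 : ∀ T₂ T₁ T₀ : StageTree (n + 1),
        T₂.sqle T₁ → T₁.sqle T₀ → T₂.sqle T₀ := by
      intro T₂ T₁ T₀ H21 H10
      cases T₂ with | node P₂ h₂ =>
      cases T₁ with | node P₁ h₁ =>
      cases T₀ with | node P₀ h₀ =>
      obtain ⟨f, hf⟩ := H21
      obtain ⟨g, hg⟩ := H10
      exact ⟨g ∘ f, key _ _ _ _ _ _ f g hf hg⟩
    have p3 : ∀ T₁ T₀ : StageTree (n + 1), T₁.sqlt T₀ → T₁.sqle T₀ := by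
      intro T₁ T₀ H10
      cases T₁ with | node P₁ h₁ =>
      cases T₀ with | node P₀ h₀ =>
      obtain ⟨f, hf, -⟩ := H10
      exact ⟨f, hf⟩
    have p4 : ∀ T₂ T₁ T₀ : StageTree (n + 1),
        T₂.sqle T₁ → T₁.sqlt T₀ → T₂.sqlt T₀ := by
      intro T₂ T₁ T₀ H21 H10
      cases T₂ with | node P₂ h₂ =>
      cases T₁ with | node P₁ h₁ =>
      cases T₀ with | node P₀ h₀ =>
      obtain ⟨f, hf⟩ := H21
      obtain ⟨g, hg, μ₀, hμ₀⟩ := H10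
      refine ⟨g ∘ f, key _ _ _ _ _ _ f g hf hg, μ₀, fun ν hν => ?_⟩
      have hA : ((h₂ ν).sq (h₁ (f ν))).1 := by
        by_cases hc : ∃ ν', ν' ≠ ν ∧ f ν' = f ν
        · exact iltle _ _ ((hf ν).1 hc)
        · exact (hf ν).2 hc
      exact ielt _ _ _ hA (hμ₀ (f ν) hν)
    have p5 : ∀ T₂ T₁ T₀ : StageTree (n + 1),
        T₂.sqlt T₁ → T₁.sqle T₀ → T₂.sqlt T₀ := by
      intro T₂ T₁ T₀ H21 H10
      cases T₂ with | node P₂ h₂ =>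
      cases T₁ with | node P₁ h₁ =>
      cases T₀ with | node P₀ h₀ =>
      obtain ⟨f, hf, μ₁, hμ₁⟩ := H21
      obtain ⟨g, hg⟩ := H10
      refine ⟨g ∘ f, key _ _ _ _ _ _ f g hf hg, g μ₁, fun ν hν => ?_⟩
      have hA : ((h₂ ν).sq (h₁ (f ν))).1 := by
        by_cases hc : ∃ ν', ν' ≠ ν ∧ f ν' = f ν
        · exact iltle _ _ ((hf ν).1 hc)
        · exact (hf ν).2 hc
      by_cases hc : f ν = μ₁
      · have h1 : ((h₂ ν).sq (h₁ μ₁)).2 := hμ₁ ν hc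
        have h2 : ((h₁ μ₁).sq (h₀ (g μ₁))).1 := by
          by_cases hc' : ∃ μ', μ' ≠ μ₁ ∧ g μ' = g μ₁
          · exact iltle _ _ ((hg μ₁).1 hc')
          · exact (hg μ₁).2 hc'
        exact ilte _ _ _ h1 h2
      · have h1 : ((h₁ (f ν)).sq (h₀ (g (f ν)))).2 :=
          (hg (f ν)).1 ⟨μ₁, fun h => hc h.symm, hν.symm⟩
        have h2 : ((h₂ ν).sq (h₀ (g μ₁))).2 := by
          rw [← hν]
          exact ielt _ _ _ hA h1
        exact h2
    exact ⟨p1, fun T₂ T₁ T₀ h2 h1 => p4 _ _ _ (p3 _ _ h2) h1, p3, p4, p5⟩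
end

section
/- For every n ∈ ℕ, the relation ⊏ between stage trees of depth n is well-founded: there is no infinite sequence T₀, T₁, T₂, … of stage trees of depth n with T_{i+1} ⊏ T_i for every i. -/
/-! ### The Dershowitz–Manna multiset order and its well-foundedness -/

/-- The (big-step) Dershowitz–Manna order on multisets. -/
def DMLT {α : Type*} (r : α → α → Prop) (M N : Multiset α) : Prop :=
  ∃ X Y Z, N = X + Y ∧ M = X + Z ∧ Y ≠ 0 ∧ ∀ z ∈ Z, ∃ y ∈ Y, r z y

section DM

variable {α : Type*} {r : α → α → Prop}

/-- Split a dominated multiset according to whether the dominating element is `a`. -/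
lemma cons_eq_add {α : Type*} (a : α) (s : Multiset α) : a ::ₘ s = s + {a} := by
  rw [← Multiset.singleton_add, add_comm]

lemma dm_split (a : α) :
    ∀ (Z Y : Multiset α), (∀ z ∈ Z, ∃ y ∈ Y + {a}, r z y) →
      ∃ Z₀ Z₁, Z = Z₀ + Z₁ ∧ (∀ z ∈ Z₀, ∃ y ∈ Y, r z y) ∧ ∀ z ∈ Z₁, r z a := by
  intro Z
  induction Z using Multiset.induction with
  | empty =>
    intro Y _; exact ⟨0, 0, by simp, by simp, by simp⟩
  | cons z Z ih =>
    intro Y hZ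
    obtain ⟨Z₀, Z₁, h1, h2, h3⟩ := ih Y (fun x hx => hZ x (Multiset.mem_cons_of_mem hx))
    obtain ⟨y, hy, hry⟩ := hZ z (Multiset.mem_cons_self z Z)
    rcases Multiset.mem_add.1 hy with hy | hy
    · exact ⟨z ::ₘ Z₀, Z₁, by rw [h1]; simp [Multiset.cons_add],
        fun x hx => by
          rcases Multiset.mem_cons.1 hx with h | h
          · exact h ▸ ⟨y, hy, hry⟩
          · exact h2 x h, h3⟩
    · have : y = a := by simpa using hy
      exact ⟨Z₀, z ::ₘ Z₁, by rw [h1]; simp [Multiset.add_cons],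
        h2, fun x hx => by
          rcases Multiset.mem_cons.1 hx with h | h
          · exact h ▸ (this ▸ hry)
          · exact h3 x h⟩

lemma dm_acc_add_single (hwf : WellFounded r) :
    ∀ a : α, ∀ M : Multiset α, Acc (DMLT r) M → Acc (DMLT r) (M + {a}) := by
  classical
  intro a
  induction a using hwf.induction with
  | _ a oih =>
    intro M hM
    induction hM with
    | intro M hMacc iih =>
      -- helper: add many elements below `a`
      have addmany : ∀ (Z₁ : Multiset α), (∀ z ∈ Z₁, r z a) →
          ∀ W : Multiset α, Acc (DMLT r) W → Acc (DMLT r) (W + Z₁) := by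
        intro Z₁
        induction Z₁ using Multiset.induction with
        | empty => intro _ W hW; simpa using hW
        | cons z Z₁ ih =>
          intro hz W hW
          have h1 : Acc (DMLT r) (W + Z₁) :=
            ih (fun x hx => hz x (Multiset.mem_cons_of_mem hx)) W hW
          have h2 : Acc (DMLT r) ((W + Z₁) + {z}) :=
            oih z (hz z (Multiset.mem_cons_self z Z₁)) (W + Z₁) h1
          have : W + (z ::ₘ Z₁) = (W + Z₁) + {z} := by
            rw [cons_eq_add, ← add_assoc]
          rwa [this]
      constructor
      intro N hN
      obtain ⟨X, Y, Z, h1, h2, hY, hZ⟩ := hN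
      by_cases haX : a ∈ X
      · -- `a` is in the unchanged part
        have hX' : X = X.erase a + {a} := by
          rw [← cons_eq_add, Multiset.cons_erase haX]
        have hM' : M = X.erase a + Y := by
          apply add_right_cancel (b := ({a} : Multiset α))
          rw [h1]
          conv_lhs => rw [hX']
          abel
        have hlt : DMLT r (X.erase a + Z) M :=
          ⟨X.erase a, Y, Z, hM', rfl, hY, hZ⟩
        have : N = (X.erase a + Z) + {a} := by
          rw [h2]
          conv_lhs => rw [hX']
          abel
        rw [this]
        exact iih _ hlt
      · -- `a` is replaced
        have haY : a ∈ Y := by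
          have : a ∈ X + Y := by
            rw [← h1]; exact Multiset.mem_add.2 (Or.inr (Multiset.mem_singleton_self a))
          rcases Multiset.mem_add.1 this with h | h
          · exact absurd h haX
          · exact h
        set Y₀ := Y.erase a with hY₀def
        have hYeq : Y = a ::ₘ Y₀ := (Multiset.cons_erase haY).symm
        have hM' : M = X + Y₀ := by
          have : M + {a} = (X + Y₀) + {a} := by
            rw [h1, hYeq, cons_eq_add]; abel
          exact add_right_cancel this
        have hZ' : ∀ z ∈ Z, ∃ y ∈ Y₀ + {a}, r z y := by
          intro z hz
          obtain ⟨y, hy, hry⟩ := hZ z hz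
          rw [hYeq] at hy
          rcases Multiset.mem_cons.1 hy with h | h
          · exact ⟨a, Multiset.mem_add.2 (Or.inr (Multiset.mem_singleton_self a)), h ▸ hry⟩
          · exact ⟨y, Multiset.mem_add.2 (Or.inl h), hry⟩
        obtain ⟨Z₀, Z₁, hZeq, hZ₀, hZ₁⟩ := dm_split a Z Y₀ hZ'
        have hacc₀ : Acc (DMLT r) (X + Z₀) := by
          by_cases hY₀ : Y₀ = 0
          · have hZ0 : Z₀ = 0 := by
              rw [Multiset.eq_zero_iff_forall_notMem]
              intro x hx
              obtain ⟨y, hy, _⟩ := hZ₀ x hx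
              rw [hY₀] at hy
              exact absurd hy (Multiset.notMem_zero y)
            have hMX : M = X := by rw [hM', hY₀, add_zero]
            rw [hZ0, add_zero, ← hMX]
            exact Acc.intro M hMacc
          · exact hMacc _ ⟨X, Y₀, Z₀, hM', rfl, hY₀, hZ₀⟩
        have : N = (X + Z₀) + Z₁ := by rw [h2, hZeq]; abel
        rw [this]
        exact addmany Z₁ hZ₁ _ hacc₀

theorem dmlt_wf (hwf : WellFounded r) : WellFounded (DMLT r) := by
  constructor
  intro M
  induction M using Multiset.induction with
  | empty =>
    constructor
    intro N hN
    obtain ⟨X, Y, Z, h1, _, hY, _⟩ := hN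
    have : X + Y = 0 := h1.symm
    rcases (add_eq_zero.1 this) with ⟨_, h⟩
    exact absurd h hY
  | cons a M ih =>
    have := dm_acc_add_single hwf a M ih
    rwa [cons_eq_add] 

/-! ### The combinatorial construction of a DM decomposition -/

theorem dm_construct {ι κ : Type*} [Fintype ι] [Fintype κ]
    (m₁ : ι → α) (m₀ : κ → α) (f : ι → κ)
    (H : ∀ i, ((∃ j, j ≠ i ∧ f j = f i) → r (m₁ i) (m₀ (f i))) ∧
      (¬(∃ j, j ≠ i ∧ f j = f i) → (r (m₁ i) (m₀ (f i)) ∨ m₁ i = m₀ (f i)))) :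
    ((∑ i, ({m₁ i} : Multiset α)) = (∑ μ, ({m₀ μ} : Multiset α)) ∨
      DMLT r (∑ i, {m₁ i}) (∑ μ, {m₀ μ})) ∧
    ((∃ μ, ∀ i, f i = μ → r (m₁ i) (m₀ μ)) →
      DMLT r (∑ i, {m₁ i}) (∑ μ, {m₀ μ})) := by
  classical
  set S : κ → Prop := fun μ =>
    ∃ i, f i = μ ∧ m₁ i = m₀ μ ∧ ¬ r (m₁ i) (m₀ μ) ∧ ∀ j, f j = μ → j = i with hS
  -- the matched part, computed on each side
  have hXeq : ∑ i ∈ Finset.univ.filter (fun i => S (f i)), ({m₁ i} : Multiset α)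
      = ∑ μ ∈ Finset.univ.filter S, ({m₀ μ} : Multiset α) := by
    refine Finset.sum_bij (fun i _ => f i) ?_ ?_ ?_ ?_
    · intro i hi
      simp only [Finset.mem_filter, Finset.mem_univ, true_and] at hi ⊢
      exact hi
    · intro i₁ h₁ i₂ h₂ hf
      simp only [Finset.mem_filter, Finset.mem_univ, true_and] at h₁
      obtain ⟨i₀, _, _, _, huniq⟩ := h₁
      rw [huniq i₁ rfl, huniq i₂ hf.symm]
    · intro μ hμ
      simp only [Finset.mem_filter, Finset.mem_univ, true_and] at hμ
      obtain ⟨i, hfi, h2, h3, h4⟩ := hμ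
      refine ⟨i, ?_, hfi⟩
      simp only [Finset.mem_filter, Finset.mem_univ, true_and]
      rw [hfi]
      exact ⟨i, hfi, h2, h3, h4⟩
    · intro i hi
      simp only [Finset.mem_filter, Finset.mem_univ, true_and] at hi
      obtain ⟨i₀, hfi₀, heq, hnr, huniq⟩ := hi
      have hii : i = i₀ := huniq i rfl
      subst hii
      rw [heq]
  have hN : (∑ μ, ({m₀ μ} : Multiset α))
      = ∑ μ ∈ Finset.univ.filter S, ({m₀ μ} : Multiset α)
        + ∑ μ ∈ Finset.univ.filter (fun μ => ¬ S μ), ({m₀ μ} : Multiset α) :=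
    (Finset.sum_filter_add_sum_filter_not _ _ _).symm
  have hM : (∑ i, ({m₁ i} : Multiset α))
      = ∑ i ∈ Finset.univ.filter (fun i => S (f i)), ({m₁ i} : Multiset α)
        + ∑ i ∈ Finset.univ.filter (fun i => ¬ S (f i)), ({m₁ i} : Multiset α) :=
    (Finset.sum_filter_add_sum_filter_not _ _ _).symm
  -- domination of the replaced part
  have hdom : ∀ z ∈ ∑ i ∈ Finset.univ.filter (fun i => ¬ S (f i)), ({m₁ i} : Multiset α),
      ∃ y ∈ ∑ μ ∈ Finset.univ.filter (fun μ => ¬ S μ), ({m₀ μ} : Multiset α), r z y := by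
    intro z hz
    rw [Multiset.mem_sum] at hz
    obtain ⟨i, hi, hzi⟩ := hz
    simp only [Finset.mem_filter, Finset.mem_univ, true_and] at hi
    rw [Multiset.mem_singleton] at hzi
    subst hzi
    have hri : r (m₁ i) (m₀ (f i)) := by
      by_cases hmulti : ∃ j, j ≠ i ∧ f j = f i
      · exact (H i).1 hmulti
      · rcases (H i).2 hmulti with h | h
        · exact h
        · by_cases hr : r (m₁ i) (m₀ (f i))
          · exact hr
          · exfalso
            apply hi
            refine ⟨i, rfl, h, hr, fun j hj => ?_⟩
            by_contra hne
            exact hmulti ⟨j, hne, hj⟩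
    refine ⟨m₀ (f i), ?_, hri⟩
    rw [Multiset.mem_sum]
    exact ⟨f i, by simp [hi], Multiset.mem_singleton_self _⟩
  constructor
  · by_cases hall : ∀ μ, S μ
    · left
      have h1 : Finset.univ.filter (fun μ => ¬ S μ) = ∅ := by
        simp [Finset.filter_eq_empty_iff, hall]
      have h2 : Finset.univ.filter (fun i : ι => ¬ S (f i)) = ∅ := by
        simp [Finset.filter_eq_empty_iff, hall]
      rw [hM, hN, h1, h2, Finset.sum_empty, Finset.sum_empty, add_zero, add_zero, hXeq]
    · right
      push_neg at hall
      obtain ⟨μ, hμ⟩ := hall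
      refine ⟨_, _, _, hN, by rw [hM, hXeq], ?_, hdom⟩
      intro h0
      have : m₀ μ ∈ (0 : Multiset α) := by
        rw [← h0, Multiset.mem_sum]
        exact ⟨μ, by simp [hμ], Multiset.mem_singleton_self _⟩
      exact absurd this (Multiset.notMem_zero _)
  · rintro ⟨μ, hμ⟩
    have hμS : ¬ S μ := by
      rintro ⟨i, hfi, _, hnr, _⟩
      exact hnr (hμ i hfi)
    refine ⟨_, _, _, hN, by rw [hM, hXeq], ?_, hdom⟩
    intro h0
    have : m₀ μ ∈ (0 : Multiset α) := by
      rw [← h0, Multiset.mem_sum]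
      exact ⟨μ, by simp [hμS], Multiset.mem_singleton_self _⟩
    exact absurd this (Multiset.notMem_zero _)

end DM

/-! ### The measure of a stage tree -/

/-- The type of the measure of a stage tree of depth `n`: iterated multisets. -/
def Mea : ℕ → Type
  | 0 => ℕ
  | n + 1 => Multiset (Mea n)

/-- The well-founded order on measures. -/
def MeaLT : {n : ℕ} → Mea n → Mea n → Prop
  | 0 => Nat.lt
  | _ + 1 => DMLT MeaLT

theorem meaLT_wf : ∀ n, WellFounded (MeaLT (n := n))
  | 0 => Nat.lt_wfRel.wf
  | n + 1 => dmlt_wf (meaLT_wf n)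

/-- The measure of a stage tree. -/
def mea : {n : ℕ} → StageTree n → Mea n
  | 0, .leaf P => P.card
  | _ + 1, .node P h => (∑ ν : {ν // ν ∈ P}, ({mea (h ν)} : Multiset (Mea _)) : Multiset (Mea _))

theorem mea_spec : ∀ {n : ℕ} (T₁ T₀ : StageTree n),
    (T₁.sqle T₀ → mea T₁ = mea T₀ ∨ MeaLT (mea T₁) (mea T₀)) ∧
    (T₁.sqlt T₀ → MeaLT (mea T₁) (mea T₀)) := by
  intro n
  induction n with
  | zero =>
    intro T₁ T₀
    cases T₁ with
    | leaf P₁ =>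
      cases T₀ with
      | leaf P₀ =>
        constructor
        · rintro ⟨f, hf⟩
          have := Fintype.card_le_of_injective f hf
          rw [Fintype.card_coe, Fintype.card_coe] at this
          rcases this.lt_or_eq with h | h
          · exact Or.inr h
          · exact Or.inl h
        · rintro ⟨f, hinj, hsur⟩
          have := Fintype.card_lt_of_injective_not_surjective f hinj hsur
          rw [Fintype.card_coe, Fintype.card_coe] at this
          exact this
  | succ n ih =>
    intro T₁ T₀
    cases T₁ with
    | node P₁ h₁ =>
      cases T₀ with
      | node P₀ h₀ =>
        have main : ∀ f : {ν // ν ∈ P₁} → {ν // ν ∈ P₀},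
            (∀ ν, ((∃ ν', ν' ≠ ν ∧ f ν' = f ν) → ((h₁ ν).sq (h₀ (f ν))).2) ∧
              (¬ (∃ ν', ν' ≠ ν ∧ f ν' = f ν) → ((h₁ ν).sq (h₀ (f ν))).1)) →
            ∀ i, ((∃ j, j ≠ i ∧ f j = f i) → MeaLT (mea (h₁ i)) (mea (h₀ (f i)))) ∧
              (¬(∃ j, j ≠ i ∧ f j = f i) →
                (MeaLT (mea (h₁ i)) (mea (h₀ (f i))) ∨ mea (h₁ i) = mea (h₀ (f i)))) := by
          intro f hf i
          constructor
          · intro hm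
            exact (ih (h₁ i) (h₀ (f i))).2 ((hf i).1 hm)
          · intro hm
            rcases (ih (h₁ i) (h₀ (f i))).1 ((hf i).2 hm) with h | h
            · exact Or.inr h
            · exact Or.inl h
        constructor
        · rintro ⟨f, hf⟩
          have := (dm_construct (r := MeaLT (n := n)) (fun ν => mea (h₁ ν))
            (fun μ => mea (h₀ μ)) f (main f hf)).1
          exact this.imp id id
        · rintro ⟨f, hf, μ, hμ⟩
          exact (dm_construct (r := MeaLT (n := n)) (fun ν => mea (h₁ ν))
            (fun μ => mea (h₀ μ)) f (main f hf)).2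
            ⟨μ, fun i hi => (ih (h₁ i) (h₀ μ)).2 (hμ i hi)⟩

/-- The relation `⊏` on stage trees of depth `n` is well-founded: there is no
infinite `⊏`-descending sequence. -/
theorem StageTree.sqlt_wellFounded (n : ℕ) :
    ¬ ∃ T : ℕ → StageTree n, ∀ i : ℕ, (T (i + 1)).sqlt (T i) := by
  rintro ⟨T, hT⟩
  have key : ∀ a : Mea n, ∀ i : ℕ, mea (T i) = a → False := by
    intro a
    induction a using (meaLT_wf n).induction with
    | _ a IH =>
      intro i hi
      exact IH (mea (T (i + 1))) (hi ▸ (mea_spec (T (i + 1)) (T i)).2 (hT i)) (i + 1) rfl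
  exact key (mea (T 0)) 0 rfl
end

section
/- Let R₀, …, R_{l−1} be tournaments on ℕ, let F₀, …, F_{l−1} be finite sets with F_i R_i-transitive for each i < l, and let Z ⊆ ℕ be a set disjoint from each F_i such that for each i < l, F_i ∪ {x} is R_i-transitive for every x ∈ Z and Z is included in a minimal R_i-interval of F_i. Then for every x ∈ Z, the sets X_ρ = { y ∈ Z∖{x} : for all i < l, R_i(y,x) holds iff ρ(i) = 1 }, for ρ ranging over 2^l, partition Z∖{x}; and for each ρ ∈ 2^l and each i < l, the pair consisting of the R_i-transitive set F_i ∪ {x} and the set X_ρ again satisfies the two conditions: F_i ∪ {x} ∪ {y} is R_i-transitive for every y ∈ X_ρ, and X_ρ is included in a minimal R_i-interval of F_i ∪ {x}. -/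
lemma em_tot {R : ℕ → ℕ → Prop} (hT : Tournament R) {a b : ℕ} (hne : a ≠ b)
    (h : ¬ R a b) : R b a := by
  by_contra h2
  exact h ((hT.2 a b hne).mpr h2)

lemma em_asymm {R : ℕ → ℕ → Prop} (hT : Tournament R) {a b : ℕ} (h1 : R a b)
    (h2 : R b a) : False := by
  rcases eq_or_ne a b with rfl | hne
  · exact hT.1 a h1
  · exact ((hT.2 a b hne).mp h1) h2

lemma em_sameSideAux {R : ℕ → ℕ → Prop} (hT : Tournament R) {F I : Set ℕ}
    (hmin : IsMinimalInterval R F I) {x y : ℕ} (hxI : x ∈ I) (hyI : y ∈ I)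
    (hyF : y ∉ F)
    (hxtr : RTransitive R (F ∪ {x})) (hytr : RTransitive R (F ∪ {y}))
    {a : ℕ} (ha : a ∈ F) (hax : R a x) : R a y := by
  by_contra h
  have hya : R y a := em_tot hT (fun hh => hyF (hh ▸ ha)) h
  rcases hmin.1 with ⟨c, hc, d, hd, hcd, rfl⟩ | ⟨c, hc, rfl⟩ | ⟨d, hd, rfl⟩ | rfl
  · have hca : R c a := hytr c (Or.inl hc) y (Or.inr rfl) a (Or.inl ha) hyI.1 hya
    have had : R a d := hxtr a (Or.inl ha) x (Or.inr rfl) d (Or.inl hd) hax hxI.2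
    exact hmin.2 a ha ⟨hca, had⟩
  · have hca : R c a := hytr c (Or.inl hc) y (Or.inr rfl) a (Or.inl ha) hyI hya
    exact hmin.2 a ha hca
  · have had : R a d := hxtr a (Or.inl ha) x (Or.inr rfl) d (Or.inl hd) hax hxI
    exact hmin.2 a ha had
  · exact hmin.2 a ha (Set.mem_univ a)

lemma em_case56 {R : ℕ → ℕ → Prop} (hT : Tournament R) {u v w : ℕ}
    (hne : w ≠ u) (himp : R w u → R w v) (hvw : R v w) : R u w :=
  em_tot hT hne (fun h => em_asymm hT (himp h) hvw)

lemma em_extTrans {R : ℕ → ℕ → Prop} (hT : Tournament R) {F I : Set ℕ}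
    (hmin : IsMinimalInterval R F I) {x y : ℕ} (hxI : x ∈ I) (hyI : y ∈ I)
    (hxF : x ∉ F) (hyF : y ∉ F)
    (hxtr : RTransitive R (F ∪ {x})) (hytr : RTransitive R (F ∪ {y})) :
    RTransitive R (F ∪ {x} ∪ {y}) := by
  have hss : ∀ a ∈ F, (R a x ↔ R a y) := fun a ha =>
    ⟨em_sameSideAux hT hmin hxI hyI hyF hxtr hytr ha,
     em_sameSideAux hT hmin hyI hxI hxF hytr hxtr ha⟩
  have hmem : ∀ u, u ∈ F ∪ {x} ∪ {y} → u ∈ F ∨ u = x ∨ u = y := by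
    intro u hu
    rcases hu with (hu | hu) | hu
    · exact Or.inl hu
    · exact Or.inr (Or.inl hu)
    · exact Or.inr (Or.inr hu)
  intro u hu v hv w hw huv hvw
  rcases hmem u hu with hu' | rfl | rfl <;>
    rcases hmem v hv with hv' | rfl | rfl <;>
      rcases hmem w hw with hw' | rfl | rfl
  all_goals try exact (hT.1 _ huv).elim
  all_goals try exact (hT.1 _ hvw).elim
  all_goals try exact (em_asymm hT huv hvw).elim
  all_goals try exact hxtr _ (Or.inl hu') _ (Or.inl hv') _ (Or.inl hw') huv hvw
  all_goals try exact hxtr _ (Or.inl hu') _ (Or.inl hv') _ (Or.inr rfl) huv hvw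
  all_goals try exact hxtr _ (Or.inl hu') _ (Or.inr rfl) _ (Or.inl hw') huv hvw
  all_goals try exact hxtr _ (Or.inr rfl) _ (Or.inl hv') _ (Or.inl hw') huv hvw
  all_goals try exact hytr _ (Or.inl hu') _ (Or.inl hv') _ (Or.inr rfl) huv hvw
  all_goals try exact hytr _ (Or.inl hu') _ (Or.inr rfl) _ (Or.inl hw') huv hvw
  all_goals try exact hytr _ (Or.inr rfl) _ (Or.inl hv') _ (Or.inl hw') huv hvw
  -- remaining: triples containing both x and y and an element of F
  all_goals try exact (hss _ hu').mp huv           -- (a, x, y)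
  all_goals try exact (hss _ hu').mpr huv          -- (a, y, x)
  all_goals try exact (em_asymm hT ((hss _ hv').mpr hvw) huv).elim  -- (x, a, y)
  all_goals try exact (em_asymm hT ((hss _ hv').mp hvw) huv).elim   -- (y, a, x)
  all_goals try exact em_case56 hT (fun hh => hxF (hh ▸ hw')) (hss _ hw').mp hvw
  all_goals try exact em_case56 hT (fun hh => hyF (hh ▸ hw')) (hss _ hw').mpr hvw

lemma em_newIntervalBelow {R : ℕ → ℕ → Prop} (hT : Tournament R) {F I₀ : Set ℕ}
    (hmin : IsMinimalInterval R F I₀) {x : ℕ} (hxI : x ∈ I₀)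
    (hxtr : RTransitive R (F ∪ {x})) {X : Set ℕ} (hXI : X ⊆ I₀)
    (hdir : ∀ y ∈ X, R y x) :
    ∃ I, IsMinimalInterval R (F ∪ {x}) I ∧ X ⊆ I := by
  rcases hmin.1 with ⟨c, hc, d, hd, hcd, rfl⟩ | ⟨c, hc, rfl⟩ | ⟨d, hd, rfl⟩ | rfl
  · refine ⟨{z | R c z ∧ R z x}, ⟨Or.inl ⟨c, Or.inl hc, x, Or.inr rfl, hxI.1, rfl⟩, ?_⟩, ?_⟩
    · rintro e (he | rfl) ⟨h1, h2⟩
      · exact hmin.2 e he ⟨h1, hxtr e (Or.inl he) x (Or.inr rfl) d (Or.inl hd) h2 hxI.2⟩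
      · exact hT.1 _ h2
    · exact fun y hy => ⟨(hXI hy).1, hdir y hy⟩
  · refine ⟨{z | R c z ∧ R z x}, ⟨Or.inl ⟨c, Or.inl hc, x, Or.inr rfl, hxI, rfl⟩, ?_⟩, ?_⟩
    · rintro e (he | rfl) ⟨h1, h2⟩
      · exact hmin.2 e he h1
      · exact hT.1 _ h2
    · exact fun y hy => ⟨hXI hy, hdir y hy⟩
  · refine ⟨{z | R z x}, ⟨Or.inr (Or.inr (Or.inl ⟨x, Or.inr rfl, rfl⟩)), ?_⟩, ?_⟩
    · rintro e (he | rfl) h1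
      · exact hmin.2 e he (hxtr e (Or.inl he) x (Or.inr rfl) d (Or.inl hd) h1 hxI)
      · exact hT.1 _ h1
    · exact hdir
  · refine ⟨{z | R z x}, ⟨Or.inr (Or.inr (Or.inl ⟨x, Or.inr rfl, rfl⟩)), ?_⟩, ?_⟩
    · rintro e (he | rfl) h1
      · exact hmin.2 e he (Set.mem_univ e)
      · exact hT.1 _ h1
    · exact hdir

lemma em_newIntervalAbove {R : ℕ → ℕ → Prop} (hT : Tournament R) {F I₀ : Set ℕ}
    (hmin : IsMinimalInterval R F I₀) {x : ℕ} (hxI : x ∈ I₀)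
    (hxtr : RTransitive R (F ∪ {x})) {X : Set ℕ} (hXI : X ⊆ I₀)
    (hdir : ∀ y ∈ X, R x y) :
    ∃ I, IsMinimalInterval R (F ∪ {x}) I ∧ X ⊆ I := by
  rcases hmin.1 with ⟨c, hc, d, hd, hcd, rfl⟩ | ⟨c, hc, rfl⟩ | ⟨d, hd, rfl⟩ | rfl
  · refine ⟨{z | R x z ∧ R z d}, ⟨Or.inl ⟨x, Or.inr rfl, d, Or.inl hd, hxI.2, rfl⟩, ?_⟩, ?_⟩
    · rintro e (he | rfl) ⟨h1, h2⟩
      · exact hmin.2 e he ⟨hxtr c (Or.inl hc) x (Or.inr rfl) e (Or.inl he) hxI.1 h1, h2⟩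
      · exact hT.1 _ h1
    · exact fun y hy => ⟨hdir y hy, (hXI hy).2⟩
  · refine ⟨{z | R x z}, ⟨Or.inr (Or.inl ⟨x, Or.inr rfl, rfl⟩), ?_⟩, ?_⟩
    · rintro e (he | rfl) h1
      · exact hmin.2 e he (hxtr c (Or.inl hc) x (Or.inr rfl) e (Or.inl he) hxI h1)
      · exact hT.1 _ h1
    · exact hdir
  · refine ⟨{z | R x z ∧ R z d}, ⟨Or.inl ⟨x, Or.inr rfl, d, Or.inl hd, hxI, rfl⟩, ?_⟩, ?_⟩
    · rintro e (he | rfl) ⟨h1, h2⟩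
      · exact hmin.2 e he h2
      · exact hT.1 _ h1
    · exact fun y hy => ⟨hdir y hy, hXI hy⟩
  · refine ⟨{z | R x z}, ⟨Or.inr (Or.inl ⟨x, Or.inr rfl, rfl⟩), ?_⟩, ?_⟩
    · rintro e (he | rfl) h1
      · exact hmin.2 e he (Set.mem_univ e)
      · exact hT.1 _ h1
    · exact hdir

/-- One-point extension of simultaneous Erdős–Moser conditions: picking
`x ∈ Z`, the sets `X_ρ` (for `ρ ∈ 2^l`) partition `Z ∖ {x}`, and each pair
`(Fᵢ ∪ {x}, X_ρ)` again satisfies the Erdős–Moser condition requirements. -/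
theorem em_one_point_extension (l : ℕ) (R : Fin l → ℕ → ℕ → Prop)
    (hR : ∀ i, Tournament (R i)) (F : Fin l → Set ℕ)
    (hFfin : ∀ i, (F i).Finite) (hFtrans : ∀ i, RTransitive (R i) (F i))
    (Z : Set ℕ) (hdisj : ∀ i, Disjoint (F i) Z)
    (hone : ∀ i, ∀ x ∈ Z, RTransitive (R i) (F i ∪ {x}))
    (hmin : ∀ i, ∃ I : Set ℕ, IsMinimalInterval (R i) (F i) I ∧ Z ⊆ I) :
    ∀ x ∈ Z,
      ((⋃ ρ : Fin l → Bool,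
          {y ∈ Z \ {x} | ∀ i, R i y x ↔ ρ i = true}) = Z \ {x}) ∧
      (∀ ρ ρ' : Fin l → Bool, ρ ≠ ρ' →
        Disjoint {y ∈ Z \ {x} | ∀ i, R i y x ↔ ρ i = true}
          {y ∈ Z \ {x} | ∀ i, R i y x ↔ ρ' i = true}) ∧
      ∀ (ρ : Fin l → Bool) (i : Fin l),
        RTransitive (R i) (F i ∪ {x}) ∧
        (∀ y ∈ {y ∈ Z \ {x} | ∀ i, R i y x ↔ ρ i = true},
          RTransitive (R i) (F i ∪ {x} ∪ {y})) ∧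
        ∃ I : Set ℕ, IsMinimalInterval (R i) (F i ∪ {x}) I ∧
          {y ∈ Z \ {x} | ∀ i, R i y x ↔ ρ i = true} ⊆ I := by
  intro x hxZ
  classical
  refine ⟨?_, ?_, ?_⟩
  · apply Set.Subset.antisymm
    · exact Set.iUnion_subset fun ρ y hy => hy.1
    · intro y hy
      exact Set.mem_iUnion.mpr ⟨fun i => decide (R i y x), hy, fun i => by simp⟩
  · intro ρ ρ' hne
    rw [Set.disjoint_left]
    rintro y ⟨hy1, hy2⟩ ⟨hy1', hy2'⟩
    apply hne
    funext i
    have h := (hy2 i).symm.trans (hy2' i)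
    cases h1 : ρ i <;> cases h2 : ρ' i <;> simp_all
  · intro ρ i
    have hxF : x ∉ F i := fun h => Set.disjoint_left.mp (hdisj i) h hxZ
    obtain ⟨I, hI, hZI⟩ := hmin i
    refine ⟨hone i x hxZ, ?_, ?_⟩
    · rintro y ⟨⟨hyZ, hyx⟩, hyρ⟩
      have hyF : y ∉ F i := fun h => Set.disjoint_left.mp (hdisj i) h hyZ
      exact em_extTrans (hR i) hI (hZI hxZ) (hZI hyZ) hxF hyF
        (hone i x hxZ) (hone i y hyZ)
    · by_cases hb : ρ i = true
      · exact em_newIntervalBelow (hR i) hI (hZI hxZ) (hone i x hxZ)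
          (fun y hy => hZI hy.1.1) (fun y hy => (hy.2 i).mpr hb)
      · refine em_newIntervalAbove (hR i) hI (hZI hxZ) (hone i x hxZ)
          (fun y hy => hZI hy.1.1) ?_
        rintro y ⟨⟨hyZ, hyx⟩, hyρ⟩
        exact em_tot (hR i) hyx (fun h => hb ((hyρ i).mp h))
end
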